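/- arXiv:2507.06898 — 11 statements merged into one kernel-verified Lean document; each statement's English description precedes it below -/
import Mathlib

section
/- (Validity of the combinatorial upper bound UB_2.) Let 𝒞 = (I_1,…,I_k) be an ordered proper coloring of G, and for u ∈ V let τ(u) be the index of its color class. Define σ_u := Σ_{h < τ(u)} max{ c_e : e ∈ δ(u), the other endpoint of e lies in I_h } (with empty max taken as 0). Then for every clique C of G, Σ_{e ∈ E[C]} c_e ≤ Σ_{h=1}^{k} max{ σ_u : u ∈ I_h }. -/
open Finset
open scoped Classical

/-- Total edge-weight of a clique. -/
def cliqueWeight {V : Type*} [Fintype V] [LinearOrder V] (c : V → V → ℕ) (C : Finset V) : ℕ :=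
  ∑ u ∈ C, ∑ v ∈ C.filter (fun v => u < v), c u v

/-- `σ u`: sum, over color classes preceding that of `u`, of the maximum weight of an
edge joining `u` to that class (empty maximum taken as `0`). -/
noncomputable def sigmaW {V : Type*} [Fintype V] (G : SimpleGraph V) (c : V → V → ℕ)
    {k : ℕ} (I : Fin k → Finset V) (τ : V → Fin k) (u : V) : ℕ :=
  ∑ h ∈ Finset.univ.filter (fun h => h < τ u),
    ((I h).filter (fun v => G.Adj u v)).sup (fun v => c u v)

/-- Validity of the combinatorial upper bound `UB₂`: for every clique `C`,
`Σ_{e ∈ E[C]} c_e ≤ Σ_h max{σ_u : u ∈ I h}`. -/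
theorem UB2_valid {V : Type*} [Fintype V] [LinearOrder V]
    (G : SimpleGraph V) (c : V → V → ℕ) (hc : ∀ u v, c u v = c v u)
    (k : ℕ) (I : Fin k → Finset V) (τ : V → Fin k)
    (hτ : ∀ v h, v ∈ I h ↔ τ v = h)
    (hind : ∀ h, ∀ u ∈ I h, ∀ v ∈ I h, ¬ G.Adj u v)
    (C : Finset V) (hC : G.IsClique (C : Set V)) :
    cliqueWeight c C ≤ ∑ h : Fin k, (I h).sup (sigmaW G c I τ) := by
  classical
  -- τ is injective on C
  have hinj : ∀ u ∈ C, ∀ v ∈ C, τ u = τ v → u = v := by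
    intro u hu v hv h
    by_contra hne
    exact hind (τ u) u ((hτ u _).2 rfl) v ((hτ v _).2 h.symm) (hC hu hv hne)
  -- Step 1: rewrite cliqueWeight as a sum over pairs with τ v < τ u
  have step1 : cliqueWeight c C
      = ∑ u ∈ C, ∑ v ∈ C.filter (fun v => τ v < τ u), c u v := by
    have h1 : cliqueWeight c C
        = ∑ p ∈ (C ×ˢ C).filter (fun p => p.1 < p.2), c p.1 p.2 := by
      simp [cliqueWeight, Finset.sum_filter, Finset.sum_product]
    have h2 : (∑ u ∈ C, ∑ v ∈ C.filter (fun v => τ v < τ u), c u v)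
        = ∑ p ∈ (C ×ˢ C).filter (fun p => τ p.2 < τ p.1), c p.1 p.2 := by
      simp [Finset.sum_filter, Finset.sum_product]
    rw [h1, h2]
    refine Finset.sum_nbij' (fun p => if τ p.2 < τ p.1 then p else p.swap)
      (fun q => if q.1 < q.2 then q else q.swap) ?_ ?_ ?_ ?_ ?_
    · intro p hp
      simp only [Finset.mem_filter, Finset.mem_product] at hp ⊢
      obtain ⟨⟨h1', h2'⟩, hlt⟩ := hp
      by_cases h : τ p.2 < τ p.1
      · simp [h, h1', h2']
      · have hne : τ p.1 ≠ τ p.2 := fun he => hlt.ne (hinj _ h1' _ h2' he)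
        have : τ p.1 < τ p.2 := lt_of_le_of_ne (not_lt.1 h) hne
        simp [h, h1', h2', this]
    · intro q hq
      simp only [Finset.mem_filter, Finset.mem_product] at hq ⊢
      obtain ⟨⟨h1', h2'⟩, hlt⟩ := hq
      by_cases h : q.1 < q.2
      · simp [h, h1', h2']
      · have hne : q.1 ≠ q.2 := fun he => hlt.ne (congrArg τ he).symm
        have : q.2 < q.1 := lt_of_le_of_ne (not_lt.1 h) (Ne.symm hne)
        simp [h, h1', h2', this]
    · intro p hp
      simp only [Finset.mem_filter, Finset.mem_product] at hp
      by_cases h : τ p.2 < τ p.1 <;> simp [h, hp.2, not_lt.2 hp.2.le]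
    · intro q hq
      simp only [Finset.mem_filter, Finset.mem_product] at hq
      by_cases h : q.1 < q.2 <;> simp [h, hq.2, not_lt.2 hq.2.le]
    · intro p hp
      by_cases h : τ p.2 < τ p.1 <;> simp [h, hc p.1 p.2]
  rw [step1]
  -- Step 2: per-vertex bound
  have step2 : ∀ u ∈ C, (∑ v ∈ C.filter (fun v => τ v < τ u), c u v)
      ≤ sigmaW G c I τ u := by
    intro u hu
    set s := C.filter (fun v => τ v < τ u) with hs
    have hle : ∀ v ∈ s, c u v ≤ ((I (τ v)).filter (fun w => G.Adj u w)).sup (fun w => c u w) := by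
      intro v hv
      simp only [hs, Finset.mem_filter] at hv
      have hne : u ≠ v := fun he => hv.2.ne (congrArg τ he).symm
      have hadj : G.Adj u v := hC hu hv.1 hne
      exact Finset.le_sup (f := fun w => c u w)
        (Finset.mem_filter.2 ⟨(hτ v _).2 rfl, hadj⟩)
    calc (∑ v ∈ s, c u v)
        ≤ ∑ v ∈ s, ((I (τ v)).filter (fun w => G.Adj u w)).sup (fun w => c u w) :=
          Finset.sum_le_sum hle
      _ = ∑ h ∈ s.image τ, ((I h).filter (fun w => G.Adj u w)).sup (fun w => c u w) := by
          rw [Finset.sum_image]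
          intro a ha b hb hab
          simp only [hs, Finset.mem_coe, Finset.mem_filter] at ha hb
          exact hinj a ha.1 b hb.1 hab
      _ ≤ sigmaW G c I τ u := by
          apply Finset.sum_le_sum_of_subset
          intro h hh
          simp only [Finset.mem_image] at hh
          obtain ⟨v, hv, rfl⟩ := hh
          simp only [hs, Finset.mem_filter] at hv
          simp [hv.2]
  calc (∑ u ∈ C, ∑ v ∈ C.filter (fun v => τ v < τ u), c u v)
      ≤ ∑ u ∈ C, sigmaW G c I τ u := Finset.sum_le_sum step2
    _ ≤ ∑ u ∈ C, (I (τ u)).sup (sigmaW G c I τ) :=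
        Finset.sum_le_sum (fun u _ => Finset.le_sup ((hτ u _).2 rfl))
    _ = ∑ h ∈ C.image τ, (I h).sup (sigmaW G c I τ) := by
        rw [Finset.sum_image]
        exact fun a ha b hb hab => hinj a ha b hb hab
    _ ≤ ∑ h : Fin k, (I h).sup (sigmaW G c I τ) :=
        Finset.sum_le_sum_of_subset (Finset.subset_univ _)
end

section
/- (Validity of the LP-dual upper bound UB_1.) Let 𝒞 be a proper coloring of G. Suppose nonnegative reals ϱ_{e,u}, ϱ_{e,v} are given for every edge e = {u,v} with ϱ_{e,u} + ϱ_{e,v} = c_e, and for each color class I let π_I := max_{u ∈ I} Σ_{e ∈ δ(u)} ϱ_{e,u}. Then for every clique C of G, Σ_{e ∈ E[C]} c_e ≤ Σ_{I ∈ 𝒞} π_I. -/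
open Finset
open scoped Classical

/-- Total edge-weight of a clique (real weights). -/
def cliqueWeightR {V : Type*} [Fintype V] [LinearOrder V] (c : V → V → ℝ) (C : Finset V) : ℝ :=
  ∑ u ∈ C, ∑ v ∈ C.filter (fun v => u < v), c u v

/-- Validity of the LP-dual upper bound `UB₁`: if the nonnegative `ϱ` split each edge
weight between the two endpoints and `π_I := max_{u ∈ I} Σ_{e ∈ δ(u)} ϱ_{e,u}`, then
the weight of every clique is at most `Σ_I π_I`. -/
theorem UB1_valid {V : Type*} [Fintype V] [LinearOrder V]
    (G : SimpleGraph V) (c : V → V → ℝ)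
    (hcsymm : ∀ u v, c u v = c v u) (hcnn : ∀ u v, 0 ≤ c u v)
    (k : ℕ) (I : Fin k → Finset V)
    (hcover : ∀ v : V, ∃ h, v ∈ I h)
    (hdisj : ∀ h h' v, v ∈ I h → v ∈ I h' → h = h')
    (hind : ∀ h, ∀ u ∈ I h, ∀ v ∈ I h, ¬ G.Adj u v)
    (hne : ∀ h, (I h).Nonempty)
    (ϱ : V → V → ℝ) (hϱnn : ∀ u v, 0 ≤ ϱ u v)
    (hsplit : ∀ u v, G.Adj u v → ϱ u v + ϱ v u = c u v)
    (C : Finset V) (hC : G.IsClique (C : Set V)) :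
    cliqueWeightR c C ≤
      ∑ h : Fin k, (I h).sup' (hne h)
        (fun u => ∑ v ∈ Finset.univ.filter (fun v => G.Adj u v), ϱ u v) := by
  classical
  set π : Fin k → ℝ := fun h => (I h).sup' (hne h)
    (fun u => ∑ v ∈ Finset.univ.filter (fun v => G.Adj u v), ϱ u v) with hπ
  choose col hcol using hcover
  have hadj : ∀ u ∈ C, ∀ v ∈ C, u ≠ v → G.Adj u v := fun u hu v hv huv => hC hu hv huv
  have hA : cliqueWeightR c C = ∑ u ∈ C, ∑ v ∈ C.filter (fun v => v ≠ u), ϱ u v := by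
    unfold cliqueWeightR
    have h1 : ∀ u ∈ C, ∑ v ∈ C.filter (fun v => u < v), c u v
        = ∑ v ∈ C.filter (fun v => u < v), ϱ u v + ∑ v ∈ C.filter (fun v => u < v), ϱ v u := by
      intro u hu
      rw [← Finset.sum_add_distrib]
      refine Finset.sum_congr rfl fun v hv => ?_
      simp only [mem_filter] at hv
      exact (hsplit u v (hadj u hu v hv.1 (ne_of_lt hv.2))).symm
    rw [Finset.sum_congr rfl h1, Finset.sum_add_distrib]
    have h2 : ∑ u ∈ C, ∑ v ∈ C.filter (fun v => u < v), ϱ v u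
        = ∑ u ∈ C, ∑ v ∈ C.filter (fun v => v < u), ϱ u v := by
      simp only [Finset.sum_filter]
      exact Finset.sum_comm
    rw [h2, ← Finset.sum_add_distrib]
    refine Finset.sum_congr rfl fun u hu => ?_
    rw [← Finset.sum_union]
    · congr 1
      ext v
      simp only [mem_union, mem_filter]
      constructor
      · rintro (⟨hv, h⟩ | ⟨hv, h⟩)
        · exact ⟨hv, (ne_of_lt h).symm⟩
        · exact ⟨hv, ne_of_lt h⟩
      · rintro ⟨hv, h⟩
        rcases lt_or_gt_of_ne h with h' | h'
        · exact Or.inr ⟨hv, h'⟩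
        · exact Or.inl ⟨hv, h'⟩
    · rw [Finset.disjoint_left]
      intro v hv hv'
      simp only [mem_filter] at hv hv'
      exact absurd hv'.2 (not_lt.mpr hv.2.le)
  have hB : ∀ u ∈ C, ∑ v ∈ C.filter (fun v => v ≠ u), ϱ u v ≤ π (col u) := by
    intro u hu
    have h1 : ∑ v ∈ C.filter (fun v => v ≠ u), ϱ u v
        ≤ ∑ v ∈ Finset.univ.filter (fun v => G.Adj u v), ϱ u v := by
      refine Finset.sum_le_sum_of_subset_of_nonneg ?_ fun v _ _ => hϱnn u v
      intro v hv
      simp only [mem_filter] at hv ⊢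
      exact ⟨mem_univ v, hadj u hu v hv.1 (Ne.symm hv.2)⟩
    exact h1.trans (Finset.le_sup' (fun u => ∑ v ∈ Finset.univ.filter (fun v => G.Adj u v), ϱ u v) (hcol u))
  have hπnn : ∀ h, 0 ≤ π h := by
    intro h
    obtain ⟨u, hu⟩ := hne h
    exact le_trans (Finset.sum_nonneg fun v _ => hϱnn u v) (Finset.le_sup' (fun u => ∑ v ∈ Finset.univ.filter (fun v => G.Adj u v), ϱ u v) hu)
  have hinj : ∀ u ∈ C, ∀ v ∈ C, col u = col v → u = v := by
    intro u hu v hv hcoluv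
    by_contra hne'
    exact hind (col u) u (hcol u) v (hcoluv ▸ hcol v) (hadj u hu v hv hne')
  calc cliqueWeightR c C = ∑ u ∈ C, ∑ v ∈ C.filter (fun v => v ≠ u), ϱ u v := hA
    _ ≤ ∑ u ∈ C, π (col u) := Finset.sum_le_sum hB
    _ = ∑ h ∈ C.image col, π h := (Finset.sum_image hinj).symm
    _ ≤ ∑ h : Fin k, π h :=
        Finset.sum_le_sum_of_subset_of_nonneg (Finset.subset_univ _) fun h _ _ => hπnn h
end

section
/- For any graph G with nonnegative edge weights c and any ordered proper coloring 𝒞, the combinatorial bound UB_2(G,c,𝒞) = Σ_I max{σ_u : u ∈ I} satisfies σ_u ≥ Σ_{h < τ(u)} c_{{u,v_h}} for any choice of vertices v_h ∈ I_h adjacent to u; consequently UB_2 is an upper bound on the weighted clique number ω(G,c). -/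
open Finset
open scoped Classical

/-- `σ_u ≥ Σ_{h < τ(u)} c_{u, w h}` for any choice of neighbors `w h ∈ I h` of `u`;
consequently `UB₂ = Σ_h max{σ_u : u ∈ I h}` is an upper bound on the weighted
clique number `ω(G,c)`. -/
theorem sigma_ge_and_UB2_ge_omega {V : Type*} [Fintype V] [LinearOrder V]
    (G : SimpleGraph V) (c : V → V → ℕ) (hc : ∀ u v, c u v = c v u)
    (k : ℕ) (I : Fin k → Finset V) (τ : V → Fin k)
    (hτ : ∀ v h, v ∈ I h ↔ τ v = h)
    (hind : ∀ h, ∀ u ∈ I h, ∀ v ∈ I h, ¬ G.Adj u v) :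
    (∀ u : V, ∀ w : Fin k → V,
      (∀ h, h < τ u → w h ∈ I h ∧ G.Adj u (w h)) →
      ∑ h ∈ Finset.univ.filter (fun h => h < τ u), c u (w h) ≤ sigmaW G c I τ u) ∧
    (∀ C : Finset V, G.IsClique (C : Set V) →
      cliqueWeight c C ≤ ∑ h : Fin k, (I h).sup (sigmaW G c I τ)) := by
  classical
  have hdiff : ∀ {u v : V}, G.Adj u v → τ u ≠ τ v := by
    intro u v huv h
    exact hind (τ v) u ((hτ u (τ v)).mpr h) v ((hτ v (τ v)).mpr rfl) huv
  constructor
  · intro u w hw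
    apply Finset.sum_le_sum
    intro h hh
    simp only [Finset.mem_filter, Finset.mem_univ, true_and] at hh
    obtain ⟨hw1, hw2⟩ := hw h hh
    exact Finset.le_sup (f := fun v => c u v) (Finset.mem_filter.mpr ⟨hw1, hw2⟩)
  · intro C hC
    have key : ∀ u ∈ C, ∑ v ∈ C.filter (fun v => τ v < τ u), c u v ≤ sigmaW G c I τ u := by
      intro u hu
      have hadj : ∀ v ∈ C.filter (fun v => τ v < τ u), G.Adj u v := by
        intro v hv
        simp only [Finset.mem_filter] at hv
        have hne : u ≠ v := by rintro rfl; exact lt_irrefl _ hv.2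
        exact hC hu hv.1 hne
      have hinj : Set.InjOn τ (C.filter (fun v => τ v < τ u)) := by
        intro x hx y hy hxy
        by_contra hne
        simp only [Finset.coe_filter, Set.mem_setOf_eq] at hx hy
        exact hdiff (hC hx.1 hy.1 hne) hxy
      calc ∑ v ∈ C.filter (fun v => τ v < τ u), c u v
          ≤ ∑ v ∈ C.filter (fun v => τ v < τ u),
              ((I (τ v)).filter (fun x => G.Adj u x)).sup (fun x => c u x) := by
            apply Finset.sum_le_sum
            intro v hv
            exact Finset.le_sup (f := fun x => c u x)
              (Finset.mem_filter.mpr ⟨(hτ v (τ v)).mpr rfl, hadj v hv⟩)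
        _ = ∑ h ∈ (C.filter (fun v => τ v < τ u)).image τ,
              ((I h).filter (fun x => G.Adj u x)).sup (fun x => c u x) :=
            (Finset.sum_image
              (f := fun h => ((I h).filter (fun x => G.Adj u x)).sup (fun x => c u x))
              (fun x hx y hy => hinj hx hy)).symm
        _ ≤ sigmaW G c I τ u := by
            apply Finset.sum_le_sum_of_subset
            intro h hh
            obtain ⟨v, hv, rfl⟩ := Finset.mem_image.mp hh
            simp only [Finset.mem_filter, Finset.mem_univ, true_and]
            exact (Finset.mem_filter.mp hv).2
    have htri : ∀ {x y : V}, x ∈ C → y ∈ C → x ≠ y → ¬ τ y < τ x → τ x < τ y := by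
      intro x y hx hy hne hnlt
      exact lt_of_le_of_ne (not_lt.mp hnlt) (hdiff (hC hx hy hne))
    have h1 : cliqueWeight c C
        = ∑ p ∈ (C ×ˢ C).filter (fun p => p.1 < p.2), c p.1 p.2 := by
      unfold cliqueWeight
      simp only [Finset.sum_filter]
      rw [Finset.sum_product' (f := fun u v => if u < v then c u v else 0)]
    have h2 : ∑ u ∈ C, ∑ v ∈ C.filter (fun v => τ v < τ u), c u v
        = ∑ p ∈ (C ×ˢ C).filter (fun p => τ p.2 < τ p.1), c p.1 p.2 := by
      simp only [Finset.sum_filter]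
      rw [Finset.sum_product' (f := fun u v => if τ v < τ u then c u v else 0)]
    have h3 : ∑ p ∈ (C ×ˢ C).filter (fun p => p.1 < p.2), c p.1 p.2
        = ∑ p ∈ (C ×ˢ C).filter (fun p => τ p.2 < τ p.1), c p.1 p.2 := by
      apply Finset.sum_nbij' (fun p => if τ p.2 < τ p.1 then p else p.swap)
        (fun q => if q.1 < q.2 then q else q.swap)
      · rintro ⟨a, b⟩ hp
        simp only [Finset.mem_filter, Finset.mem_product] at hp ⊢
        obtain ⟨⟨ha, hb⟩, hab⟩ := hp
        by_cases h : τ b < τ a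
        · simp [h, ha, hb]
        · simp [h, Prod.swap, ha, hb, htri ha hb (ne_of_lt hab) h]
      · rintro ⟨a, b⟩ hp
        simp only [Finset.mem_filter, Finset.mem_product] at hp ⊢
        obtain ⟨⟨ha, hb⟩, hab⟩ := hp
        by_cases h : a < b
        · simp [h, ha, hb]
        · have hne : a ≠ b := fun e => by subst e; exact lt_irrefl _ hab
          have : b < a := lt_of_le_of_ne (not_lt.mp h) hne.symm
          simp [h, Prod.swap, ha, hb, this]
      · rintro ⟨a, b⟩ hp
        simp only [Finset.mem_filter, Finset.mem_product] at hp
        obtain ⟨⟨ha, hb⟩, hab⟩ := hp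
        by_cases h : τ b < τ a
        · simp [h, hab]
        · simp [h, Prod.swap, not_lt.mpr (le_of_lt hab)]
      · rintro ⟨a, b⟩ hp
        simp only [Finset.mem_filter, Finset.mem_product] at hp
        obtain ⟨⟨ha, hb⟩, hab⟩ := hp
        by_cases h : a < b
        · simp [h, hab]
        · simp [h, Prod.swap, not_lt.mpr (le_of_lt hab)]
      · rintro ⟨a, b⟩ hp
        by_cases h : τ b < τ a
        · simp [h]
        · simp [h, Prod.swap, hc a b]
    calc cliqueWeight c C
        = ∑ u ∈ C, ∑ v ∈ C.filter (fun v => τ v < τ u), c u v := by rw [h1, h3, h2]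
      _ ≤ ∑ u ∈ C, (I (τ u)).sup (sigmaW G c I τ) := by
          apply Finset.sum_le_sum
          intro u hu
          exact le_trans (key u hu) (Finset.le_sup ((hτ u (τ u)).mpr rfl))
      _ = ∑ h ∈ C.image τ, (I h).sup (sigmaW G c I τ) := by
          refine (Finset.sum_image (f := fun h => (I h).sup (sigmaW G c I τ)) ?_).symm
          intro x hx y hy hxy
          by_contra hne
          exact hdiff (hC hx hy hne) hxy
      _ ≤ ∑ h : Fin k, (I h).sup (sigmaW G c I τ) :=
          Finset.sum_le_sum_of_subset (Finset.subset_univ _)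
end

section
/- For the instances (G^1_n, c^1_n) and any proper coloring 𝒞 of G^1_n, UB_1(G^1_n, c^1_n, 𝒞) ≥ (1/2) Σ_{e ∈ E} c_e = n(n−1)/2 + (n/2)·c̄, where c̄ = n(n−1)/2 − 1. Hence UB_1(G^1_n,c^1_n,𝒞)/ω(G^1_n,c^1_n) ≥ 1 + n/2 − 1/(n−1), which tends to infinity as n → ∞. -/
open Finset
open scoped Classical

def G1 (n : ℕ) : SimpleGraph (Fin (2 * n)) :=
  SimpleGraph.fromRel (fun u v =>
    ((u : ℕ) < n ∧ (v : ℕ) < n) ∨ (n ≤ (u : ℕ) ∧ n ≤ (v : ℕ)) ∨ ((u : ℕ) + n = (v : ℕ)))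

def c1 (n : ℕ) : Fin (2 * n) → Fin (2 * n) → ℕ := fun u v =>
  if (u : ℕ) + n = (v : ℕ) ∨ (v : ℕ) + n = (u : ℕ) then n * (n - 1) / 2 - 1 else 1


lemma G1_adj (n : ℕ) (u v : Fin (2*n)) : (G1 n).Adj u v ↔ u ≠ v ∧
    (((u:ℕ)<n ∧ (v:ℕ)<n) ∨ (n ≤ (u:ℕ) ∧ n ≤ (v:ℕ)) ∨ ((u:ℕ)+n=(v:ℕ)) ∨ ((v:ℕ)+n=(u:ℕ))) := by
  simp only [G1, SimpleGraph.fromRel_adj]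
  tauto

def partner (n : ℕ) (u : Fin (2*n)) : Fin (2*n) :=
  if _ : (u:ℕ) < n then ⟨u + n, by omega⟩ else ⟨u - n, by have := u.isLt; omega⟩

lemma filter_match (n : ℕ) (hn : 1 ≤ n) (u : Fin (2*n)) :
    (univ.filter fun v => (G1 n).Adj u v ∧ ((u:ℕ)+n=(v:ℕ) ∨ (v:ℕ)+n=(u:ℕ))) =
    {partner n u} := by
  have hu := u.isLt
  ext v
  have hv := v.isLt
  simp only [mem_filter, mem_univ, true_and, mem_singleton, G1_adj, ne_eq, partner]
  split_ifs with h <;> rw [Fin.ext_iff, Fin.ext_iff] <;> simp only [Fin.val_mk] <;> omega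

lemma filter_nonmatch (n : ℕ) (u : Fin (2*n)) :
    (univ.filter fun v => (G1 n).Adj u v ∧ ¬((u:ℕ)+n=(v:ℕ) ∨ (v:ℕ)+n=(u:ℕ))) =
    (univ.filter fun v : Fin (2*n) => ((v:ℕ) < n ↔ (u:ℕ) < n)).erase u := by
  have hu := u.isLt
  ext v
  have hv := v.isLt
  simp only [mem_filter, mem_univ, true_and, mem_erase, G1_adj, ne_eq]
  rw [Fin.ext_iff, Fin.ext_iff]
  constructor
  · rintro ⟨⟨h1, h2⟩, h3⟩; omega
  · rintro ⟨h1, h2⟩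
    refine ⟨⟨?_, ?_⟩, ?_⟩ <;> omega

def shiftEmb (n : ℕ) : Fin n ↪ Fin (2*n) where
  toFun i := ⟨n + i, by omega⟩
  inj' a b h := by
    rw [Fin.mk_eq_mk] at h
    exact Fin.ext (by omega)

lemma card_lo (n : ℕ) : (univ.filter fun v : Fin (2*n) => (v:ℕ) < n).card = n := by
  have : (univ.filter fun v : Fin (2*n) => (v:ℕ) < n) =
      (univ : Finset (Fin n)).map ⟨Fin.castLE (by omega), Fin.castLE_injective _⟩ := by
    ext v
    simp only [mem_filter, mem_univ, true_and, mem_map, Function.Embedding.coeFn_mk]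
    constructor
    · intro h; exact ⟨⟨v, h⟩, rfl⟩
    · rintro ⟨i, rfl⟩; exact i.isLt
  rw [this, card_map, card_univ, Fintype.card_fin]

lemma card_hi (n : ℕ) : (univ.filter fun v : Fin (2*n) => ¬ ((v:ℕ) < n)).card = n := by
  have : (univ.filter fun v : Fin (2*n) => ¬ ((v:ℕ) < n)) =
      (univ : Finset (Fin n)).map (shiftEmb n) := by
    ext v
    simp only [mem_filter, mem_univ, true_and, mem_map]
    constructor
    · intro h; exact ⟨⟨v - n, by have := v.isLt; omega⟩, Fin.ext (by simp [shiftEmb]; show n + ((v:ℕ) - n) = (v:ℕ); omega)⟩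
    · rintro ⟨i, rfl⟩; simp [shiftEmb]; exact Nat.le_add_right _ _
  rw [this, card_map, card_univ, Fintype.card_fin]

lemma card_side (n : ℕ) (u : Fin (2*n)) :
    (univ.filter fun v : Fin (2*n) => ((v:ℕ) < n ↔ (u:ℕ) < n)).card = n := by
  by_cases h : (u:ℕ) < n
  · have e : (univ.filter fun v : Fin (2*n) => ((v:ℕ) < n ↔ (u:ℕ) < n)) =
        (univ.filter fun v : Fin (2*n) => (v:ℕ) < n) := by
      ext v; simp [h]
    rw [e, card_lo]
  · have e : (univ.filter fun v : Fin (2*n) => ((v:ℕ) < n ↔ (u:ℕ) < n)) =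
        (univ.filter fun v : Fin (2*n) => ¬((v:ℕ) < n)) := by
      ext v; simp [h]
    rw [e, card_hi]

lemma sum_c1_nbhd (n : ℕ) (hn : 2 ≤ n) (u : Fin (2*n)) :
    ∑ v ∈ univ.filter (fun v => (G1 n).Adj u v), (c1 n u v : ℝ)
      = ((n:ℝ) - 1) + ((n:ℝ) * ((n:ℝ) - 1) / 2 - 1) := by
  classical
  rw [← Finset.sum_filter_add_sum_filter_not (univ.filter (fun v => (G1 n).Adj u v))
      (fun v => (u:ℕ)+n=(v:ℕ) ∨ (v:ℕ)+n=(u:ℕ)) (fun v => (c1 n u v : ℝ))]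
  rw [Finset.filter_filter, Finset.filter_filter, filter_match n (by omega) u,
    filter_nonmatch n u]
  have hcbar : ((n * (n-1) / 2 - 1 : ℕ) : ℝ) = (n:ℝ) * ((n:ℝ) - 1) / 2 - 1 := by
    have h2 : 2 ∣ n * (n - 1) := by
      rcases Nat.even_or_odd n with h | h
      · exact Dvd.dvd.mul_right h.two_dvd _
      · exact Dvd.dvd.mul_left (Nat.Odd.sub_odd h odd_one).two_dvd _
    have h1 : 1 ≤ n * (n-1) / 2 := by
      have : 2 ≤ n * (n - 1) := by nlinarith [Nat.sub_add_cancel (by omega : 1 ≤ n)]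
      omega
    have hq : ((n*(n-1)/2 : ℕ) : ℝ) = (n:ℝ)*((n:ℝ)-1)/2 := by
      rw [Nat.cast_div h2 (by norm_num)]
      push_cast [Nat.cast_sub (by omega : 1 ≤ n)]
      ring
    rw [Nat.cast_sub h1, hq, Nat.cast_one]
  have hM : ((u:ℕ)+n = (partner n u : ℕ) ∨ ((partner n u : ℕ))+n = (u:ℕ)) := by
    have hu := u.isLt
    by_cases h : (u:ℕ) < n
    · left; simp [partner, h]
    · right; simp [partner, h]; omega
  have hmatch : c1 n u (partner n u) = n * (n-1) / 2 - 1 := by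
    simp [c1, hM]
  have hones : ∀ v ∈ (univ.filter fun v : Fin (2*n) => ((v:ℕ) < n ↔ (u:ℕ) < n)).erase u,
      (c1 n u v : ℝ) = 1 := by
    intro v hv
    rw [mem_erase, mem_filter] at hv
    have hv2 := v.isLt
    have huv : ¬ ((u:ℕ) + n = (v:ℕ) ∨ (v:ℕ) + n = (u:ℕ)) := by
      have : (v:ℕ) ≠ (u:ℕ) := fun hh => hv.1 (Fin.ext hh)
      omega
    simp [c1, huv]
  rw [Finset.sum_singleton, hmatch, hcbar, Finset.sum_congr rfl hones, Finset.sum_const,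
    card_erase_of_mem (by simp), card_side, nsmul_eq_mul, mul_one]
  have : ((n - 1 : ℕ) : ℝ) = (n:ℝ) - 1 := by
    push_cast [Nat.cast_sub (by omega : 1 ≤ n)]; ring
  rw [this]
  ring

/-- For any proper coloring of `G¹ₙ` and any feasible solution of the `UB₁` dual LP,
the objective value is at least `(1/2) Σ_e c_e = n(n-1)/2 + (n/2)·c̄`; hence the ratio
`UB₁/ω` is at least `1 + n/2 - 1/(n-1)`, which tends to infinity. -/
theorem UB1_G1_unbounded (n : ℕ) (hn : 2 ≤ n)
    (k : ℕ) (I : Fin k → Finset (Fin (2 * n)))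
    (hcover : ∀ v, ∃ h, v ∈ I h)
    (hdisj : ∀ h h' v, v ∈ I h → v ∈ I h' → h = h')
    (hind : ∀ h, ∀ u ∈ I h, ∀ v ∈ I h, ¬ (G1 n).Adj u v)
    (ϱ : Fin (2 * n) → Fin (2 * n) → ℝ) (hϱnn : ∀ u v, 0 ≤ ϱ u v)
    (hsplit : ∀ u v, (G1 n).Adj u v → ϱ u v + ϱ v u = (c1 n u v : ℝ))
    (π : Fin k → ℝ) (hπnn : ∀ h, 0 ≤ π h)
    (hπ : ∀ h, ∀ u ∈ I h,
      ∑ v ∈ Finset.univ.filter (fun v => (G1 n).Adj u v), ϱ u v ≤ π h) :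
    ((n : ℝ) * ((n : ℝ) - 1) / 2 + ((n : ℝ) / 2) * ((n : ℝ) * ((n : ℝ) - 1) / 2 - 1)
        ≤ ∑ h, π h) ∧
    (1 + (n : ℝ) / 2 - 1 / ((n : ℝ) - 1)
        ≤ (∑ h, π h) / ((n : ℝ) * ((n : ℝ) - 1) / 2)) := by
  classical
  set N : Fin (2*n) → Finset (Fin (2*n)) :=
    fun u => univ.filter (fun v => (G1 n).Adj u v) with hN
  set T : ℝ := ∑ u, ∑ v ∈ N u, ϱ u v with hT
  -- colour classes have size at most 2
  have hcard2 : ∀ h, (I h).card ≤ 2 := by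
    intro h
    have : (I h).card ≤ (univ : Finset Bool).card := by
      refine Finset.card_le_card_of_injOn (fun v => decide ((v:ℕ) < n))
        (fun _ _ => mem_univ _) ?_
      intro u hu v hv huv
      by_contra hne
      apply hind h u hu v hv
      rw [G1_adj]
      refine ⟨hne, ?_⟩
      simp only [decide_eq_decide] at huv
      by_cases hc : (u:ℕ) < n
      · exact Or.inl ⟨hc, huv.mp hc⟩
      · exact Or.inr (Or.inl ⟨by omega, by have := (not_iff_not.mpr huv).mp hc; omega⟩)
    simpa using this
  -- partition of the vertex set
  have hpart : ∀ f : Fin (2*n) → ℝ, ∑ v, f v = ∑ h, ∑ v ∈ I h, f v := by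
    intro f
    have hdisj' : Set.PairwiseDisjoint ↑(univ : Finset (Fin k)) I := by
      intro a _ b _ hab
      refine Finset.disjoint_left.mpr fun v hva hvb => hab (hdisj a b v hva hvb)
    rw [← Finset.sum_biUnion hdisj']
    congr 1
    ext v
    simp only [mem_biUnion, mem_univ, true_and]
    exact iff_of_true trivial (hcover v)
  -- swap symmetry
  have hswap : ∑ u, ∑ v ∈ N u, ϱ v u = T := by
    rw [hT]
    simp_rw [hN, Finset.sum_filter]
    rw [Finset.sum_comm]
    refine Finset.sum_congr rfl fun v _ => Finset.sum_congr rfl fun u _ => ?_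
    rw [SimpleGraph.adj_comm]
  -- total load
  have htot : 2 * T = 2 * ((n:ℝ) * (((n:ℝ) - 1) + ((n:ℝ) * ((n:ℝ) - 1) / 2 - 1))) := by
    have : 2 * T = ∑ u, ∑ v ∈ N u, (c1 n u v : ℝ) := by
      rw [two_mul]
      nth_rewrite 1 [← hswap]
      rw [← Finset.sum_add_distrib]
      refine Finset.sum_congr rfl fun u _ => ?_
      rw [← Finset.sum_add_distrib]
      refine Finset.sum_congr rfl fun v hv => ?_
      rw [hN, mem_filter] at hv
      rw [add_comm (ϱ v u)]
      exact hsplit u v hv.2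
    rw [this]
    have : ∀ u : Fin (2*n), ∑ v ∈ N u, (c1 n u v : ℝ)
        = ((n:ℝ) - 1) + ((n:ℝ) * ((n:ℝ) - 1) / 2 - 1) := fun u => sum_c1_nbhd n hn u
    rw [Finset.sum_congr rfl fun u _ => this u, Finset.sum_const, card_univ,
      Fintype.card_fin, nsmul_eq_mul]
    push_cast
    ring
  have hTval : T = (n:ℝ) * (((n:ℝ) - 1) + ((n:ℝ) * ((n:ℝ) - 1) / 2 - 1)) := by
    linarith
  -- LP bound
  have hmain : T ≤ 2 * ∑ h, π h := by
    rw [hT, hpart (fun u => ∑ v ∈ N u, ϱ u v), Finset.mul_sum]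
    refine Finset.sum_le_sum fun h _ => ?_
    calc ∑ u ∈ I h, ∑ v ∈ N u, ϱ u v ≤ ∑ u ∈ I h, π h :=
          Finset.sum_le_sum fun u hu => hπ h u hu
      _ = (I h).card * π h := by rw [Finset.sum_const, nsmul_eq_mul]
      _ ≤ 2 * π h := by
          apply mul_le_mul_of_nonneg_right _ (hπnn h)
          exact_mod_cast Nat.cast_le.mpr (hcard2 h)
  have hA : (n : ℝ) * ((n : ℝ) - 1) / 2 + ((n : ℝ) / 2) * ((n : ℝ) * ((n : ℝ) - 1) / 2 - 1)
      ≤ ∑ h, π h := by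
    rw [hTval] at hmain
    linarith
  refine ⟨hA, ?_⟩
  have hn1 : (1:ℝ) ≤ (n:ℝ) - 1 := by
    have : (2:ℝ) ≤ (n:ℝ) := by exact_mod_cast hn
    linarith
  have hD : (0:ℝ) < (n:ℝ) * ((n:ℝ) - 1) / 2 := by nlinarith
  rw [le_div_iff₀ hD]
  have heq : (1 + (n:ℝ) / 2 - 1 / ((n:ℝ) - 1)) * ((n:ℝ) * ((n:ℝ) - 1) / 2)
      = (n : ℝ) * ((n : ℝ) - 1) / 2 + ((n : ℝ) / 2) * ((n : ℝ) * ((n : ℝ) - 1) / 2 - 1) := by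
    field_simp
    ring
  rw [heq]
  exact hA
end

section
/- For the instances (G^1_n, c^1_n) and any ordered proper coloring 𝒞, one has Σ_{v ∈ V} σ_v ≥ n·c̄, where c̄ = n(n−1)/2 − 1: indeed for each matching edge {w, n+w}, the endpoint whose color index is larger contributes at least c̄ to its σ-value. -/
open Finset
open scoped Classical

lemma sigma_ge_aux {n k : ℕ} (I : Fin k → Finset (Fin (2 * n))) (τ : Fin (2 * n) → Fin k)
    (hτ : ∀ v h, v ∈ I h ↔ τ v = h)
    {x y : Fin (2 * n)} (hadj : (G1 n).Adj x y) (hlt : τ y < τ x) :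
    c1 n x y ≤ sigmaW (G1 n) (c1 n) I τ x := by
  unfold sigmaW
  have hmem : τ y ∈ Finset.univ.filter (fun h => h < τ x) := by simp [hlt]
  have h1 : c1 n x y ≤ ((I (τ y)).filter (fun v => (G1 n).Adj x v)).sup (fun v => c1 n x v) := by
    apply Finset.le_sup
    simp only [Finset.mem_filter]
    exact ⟨(hτ y (τ y)).2 rfl, hadj⟩
  exact h1.trans (Finset.single_le_sum
    (f := fun h => ((I h).filter (fun v => (G1 n).Adj x v)).sup (fun v => c1 n x v))
    (fun _ _ => Nat.zero_le _) hmem)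

/-- For `(G¹ₙ, c¹ₙ)` and any ordered proper coloring, `Σ_v σ_v ≥ n·c̄` where
`c̄ = n(n-1)/2 - 1`. -/
theorem sigma_sum_G1 (n : ℕ)
    (k : ℕ) (I : Fin k → Finset (Fin (2 * n))) (τ : Fin (2 * n) → Fin k)
    (hτ : ∀ v h, v ∈ I h ↔ τ v = h)
    (hind : ∀ h, ∀ u ∈ I h, ∀ v ∈ I h, ¬ (G1 n).Adj u v) :
    n * (n * (n - 1) / 2 - 1) ≤ ∑ v, sigmaW (G1 n) (c1 n) I τ v := by
  rcases Nat.eq_zero_or_pos n with hn | hn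
  · simp [hn]
  set cbar := n * (n - 1) / 2 - 1 with hcbar
  have key : ∀ w : Fin n, ∃ x : Fin (2 * n),
      ((x : ℕ) = (w : ℕ) ∨ (x : ℕ) = (w : ℕ) + n) ∧
        cbar ≤ sigmaW (G1 n) (c1 n) I τ x := by
    intro w
    have hwlt : (w : ℕ) < n := w.isLt
    set a : Fin (2 * n) := ⟨(w : ℕ), by omega⟩ with ha
    set b : Fin (2 * n) := ⟨(w : ℕ) + n, by omega⟩ with hb
    have hne : a ≠ b := Fin.ne_of_val_ne (by show (w : ℕ) ≠ (w : ℕ) + n; omega)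
    have hadj : (G1 n).Adj a b := ⟨hne, Or.inl (Or.inr (Or.inr rfl))⟩
    have hcond : (a : ℕ) + n = (b : ℕ) := rfl
    have hcab : c1 n a b = cbar := by simp [c1, hcond, hcbar]
    have hcba : c1 n b a = cbar := by simp [c1, hcond, hcbar]
    have hτne : τ a ≠ τ b := by
      intro h
      exact hind (τ a) a ((hτ a (τ a)).2 rfl) b ((hτ b (τ a)).2 h.symm) hadj
    rcases lt_or_gt_of_ne hτne with h | h
    · exact ⟨b, Or.inr rfl, hcba ▸ sigma_ge_aux I τ hτ hadj.symm h⟩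
    · exact ⟨a, Or.inl rfl, hcab ▸ sigma_ge_aux I τ hτ hadj h⟩
  choose f hf1 hf2 using key
  have hinj : Function.Injective f := by
    intro w1 w2 h
    have h1 := hf1 w1
    have h2 := hf1 w2
    have hv : (f w1 : ℕ) = (f w2 : ℕ) := by rw [h]
    have := w1.isLt
    have := w2.isLt
    apply Fin.ext
    omega
  calc n * cbar = ∑ _w : Fin n, cbar := by simp [mul_comm]
    _ ≤ ∑ w : Fin n, sigmaW (G1 n) (c1 n) I τ (f w) :=
        Finset.sum_le_sum (fun w _ => hf2 w)
    _ = ∑ x ∈ Finset.univ.image f, sigmaW (G1 n) (c1 n) I τ x :=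
        (Finset.sum_image (fun w _ w' _ h => hinj h)).symm
    _ ≤ ∑ x, sigmaW (G1 n) (c1 n) I τ x :=
        Finset.sum_le_sum_of_subset (Finset.subset_univ _)
end

section
/- For the instances (G^1_n, c^1_n) and any ordered proper coloring 𝒞_n, UB_2(G^1_n,c^1_n,𝒞_n) ≥ (n/2)(n(n−1)/2 − 1), hence UB_2(G^1_n,c^1_n,𝒞_n)/ω(G^1_n,c^1_n) ≥ n/2 − 1/(n−1) → ∞ as n → ∞. -/
open Finset
open scoped Classical

lemma adj_same {n : ℕ} {u v : Fin (2 * n)} (huv : u ≠ v)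
    (h : ((u : ℕ) < n ∧ (v : ℕ) < n) ∨ (n ≤ (u : ℕ) ∧ n ≤ (v : ℕ))) :
    (G1 n).Adj u v := by
  rw [G1, SimpleGraph.fromRel_adj]
  exact ⟨huv, Or.inl (h.elim (fun h => Or.inl h) (fun h => Or.inr (Or.inl h)))⟩

/-- For `(G¹ₙ, c¹ₙ)` and any ordered proper coloring,
`UB₂ ≥ (n/2)(n(n-1)/2 - 1)`, hence `UB₂/ω ≥ n/2 - 1/(n-1)`, which tends to infinity. -/
theorem UB2_G1_unbounded (n : ℕ) (hn : 2 ≤ n)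
    (k : ℕ) (I : Fin k → Finset (Fin (2 * n))) (τ : Fin (2 * n) → Fin k)
    (hτ : ∀ v h, v ∈ I h ↔ τ v = h)
    (hind : ∀ h, ∀ u ∈ I h, ∀ v ∈ I h, ¬ (G1 n).Adj u v) :
    (((n : ℝ) / 2) * ((n : ℝ) * ((n : ℝ) - 1) / 2 - 1)
        ≤ ∑ h : Fin k, (↑((I h).sup (sigmaW (G1 n) (c1 n) I τ)) : ℝ)) ∧
    ((n : ℝ) / 2 - 1 / ((n : ℝ) - 1)
        ≤ (∑ h : Fin k, (↑((I h).sup (sigmaW (G1 n) (c1 n) I τ)) : ℝ))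
            / ((n : ℝ) * ((n : ℝ) - 1) / 2)) := by
  set M : ℕ := n * (n - 1) / 2 - 1 with hMdef
  -- vertices
  have hlt : ∀ i : Fin n, (i : ℕ) < 2 * n := fun i => by omega
  have hlt' : ∀ i : Fin n, (i : ℕ) + n < 2 * n := fun i => by omega
  set u : Fin n → Fin (2 * n) := fun i => ⟨i, hlt i⟩ with hu
  set w : Fin n → Fin (2 * n) := fun i => ⟨(i : ℕ) + n, hlt' i⟩ with hw
  have hne : ∀ i, u i ≠ w i := by
    intro i h
    have := congrArg (fun x : Fin (2 * n) => (x : ℕ)) h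
    simp [hu, hw] at this
    omega
  have hadj : ∀ i, (G1 n).Adj (u i) (w i) := by
    intro i
    rw [G1, SimpleGraph.fromRel_adj]
    exact ⟨hne i, Or.inl (Or.inr (Or.inr rfl))⟩
  have hc : ∀ i, c1 n (u i) (w i) = M ∧ c1 n (w i) (u i) = M := by
    intro i
    constructor <;> · simp [c1, hu, hw, hMdef]
  -- τ (u i) ≠ τ (w i)
  have hτne : ∀ i, τ (u i) ≠ τ (w i) := by
    intro i h
    exact hind (τ (w i)) (u i) ((hτ _ _).2 h) (w i) ((hτ _ _).2 rfl) (hadj i)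
  -- later vertex
  set L : Fin n → Fin (2 * n) := fun i => if τ (u i) < τ (w i) then w i else u i with hL
  set E : Fin n → Fin (2 * n) := fun i => if τ (u i) < τ (w i) then u i else w i with hE
  have hEL : ∀ i, τ (E i) < τ (L i) := by
    intro i
    by_cases h : τ (u i) < τ (w i)
    · simp [hL, hE, h]
    · simp [hL, hE, h]
      exact lt_of_le_of_ne (not_lt.1 h) (Ne.symm (hτne i))
  have hadjLE : ∀ i, (G1 n).Adj (L i) (E i) := by
    intro i
    by_cases h : τ (u i) < τ (w i)
    · simp only [hL, hE, if_pos h]; exact (hadj i).symm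
    · simp only [hL, hE, if_neg h]; exact hadj i
  have hcLE : ∀ i, c1 n (L i) (E i) = M := by
    intro i
    by_cases h : τ (u i) < τ (w i)
    · simp only [hL, hE, if_pos h]; exact (hc i).2
    · simp only [hL, hE, if_neg h]; exact (hc i).1
  -- sigma bound
  have hsig : ∀ i, M ≤ sigmaW (G1 n) (c1 n) I τ (L i) := by
    intro i
    have h1 : τ (E i) ∈ Finset.univ.filter (fun h => h < τ (L i)) := by
      simp [hEL i]
    have h2 : E i ∈ (I (τ (E i))).filter (fun v => (G1 n).Adj (L i) v) := by
      simp [(hτ (E i) (τ (E i))).2 rfl, hadjLE i]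
    calc M = c1 n (L i) (E i) := (hcLE i).symm
      _ ≤ ((I (τ (E i))).filter (fun v => (G1 n).Adj (L i) v)).sup (fun v => c1 n (L i) v) :=
          Finset.le_sup h2
      _ ≤ sigmaW (G1 n) (c1 n) I τ (L i) := by
          rw [sigmaW]
          exact Finset.single_le_sum
            (f := fun h => ((I h).filter (fun v => (G1 n).Adj (L i) v)).sup
              (fun v => c1 n (L i) v)) (fun _ _ => Nat.zero_le _) h1
  -- each color class has at most 2 vertices
  have hcard : ∀ h, (I h).card ≤ 2 := by
    intro h
    by_contra hlt3
    obtain ⟨a, b, c, ha, hb, hc', hab, hac, hbc⟩ := Finset.two_lt_card_iff.1 (not_le.1 hlt3)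
    have key : ∀ x y : Fin (2 * n), x ∈ I h → y ∈ I h → x ≠ y →
        ¬ (((x : ℕ) < n ∧ (y : ℕ) < n) ∨ (n ≤ (x : ℕ) ∧ n ≤ (y : ℕ))) := by
      intro x y hx hy hxy hside
      exact hind h x hx y hy (adj_same hxy hside)
    rcases lt_or_ge (a : ℕ) n with h1 | h1 <;> rcases lt_or_ge (b : ℕ) n with h2 | h2 <;>
      rcases lt_or_ge (c : ℕ) n with h3 | h3
    · exact key a b ha hb hab (Or.inl ⟨h1, h2⟩)
    · exact key a b ha hb hab (Or.inl ⟨h1, h2⟩)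
    · exact key a c ha hc' hac (Or.inl ⟨h1, h3⟩)
    · exact key b c hb hc' hbc (Or.inr ⟨h2, h3⟩)
    · exact key b c hb hc' hbc (Or.inl ⟨h2, h3⟩)
    · exact key a c ha hc' hac (Or.inr ⟨h1, h3⟩)
    · exact key a b ha hb hab (Or.inr ⟨h1, h2⟩)
    · exact key a b ha hb hab (Or.inr ⟨h1, h2⟩)
  -- L is injective
  have hLinj : Function.Injective L := by
    intro i j hij
    have : ((L i : Fin (2 * n)) : ℕ) = ((L j : Fin (2 * n)) : ℕ) := congrArg _ hij
    by_cases h1 : τ (u i) < τ (w i) <;> by_cases h2 : τ (u j) < τ (w j) <;>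
      simp only [hL, if_pos, if_neg, h1, h2, if_true, if_false] at this <;>
      simp only [hu, hw] at this <;>
      · apply Fin.ext; omega
  -- the set of "big" color classes
  set S : Finset (Fin k) := Finset.univ.image (fun i => τ (L i)) with hS
  have hfib : ∀ a ∈ S, (Finset.univ.filter (fun i : Fin n => τ (L i) = a)).card ≤ 2 := by
    intro a _
    calc (Finset.univ.filter (fun i : Fin n => τ (L i) = a)).card
        ≤ (I a).card := by
          apply Finset.card_le_card_of_injOn L
          · intro i hi
            simp only [Finset.coe_filter, Finset.mem_coe, Set.mem_setOf_eq, Finset.mem_filter] at hi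
            exact (hτ _ _).2 hi.2
          · exact fun x _ y _ h => hLinj h
      _ ≤ 2 := hcard a
  have hnS : n ≤ 2 * S.card := by
    have := Finset.card_le_mul_card_image (f := fun i => τ (L i)) Finset.univ 2 hfib
    simpa using this
  have hsup : ∀ a ∈ S, M ≤ (I a).sup (sigmaW (G1 n) (c1 n) I τ) := by
    intro a haS
    obtain ⟨i, _, hi⟩ := Finset.mem_image.1 haS
    calc M ≤ sigmaW (G1 n) (c1 n) I τ (L i) := hsig i
      _ ≤ (I a).sup (sigmaW (G1 n) (c1 n) I τ) := Finset.le_sup (by rw [hτ]; exact hi)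
  -- cast of M
  have hdvd : 2 ∣ n * (n - 1) := by
    rcases Nat.even_or_odd n with h | h
    · exact Dvd.dvd.mul_right h.two_dvd _
    · exact Dvd.dvd.mul_left (Nat.Odd.sub_odd h odd_one).two_dvd _
  have h1le : 1 ≤ n * (n - 1) / 2 := by
    rw [Nat.le_div_iff_mul_le (by norm_num)]
    have h : 1 ≤ n - 1 := by omega
    calc 1 * 2 = 2 * 1 := by ring
      _ ≤ n * (n - 1) := Nat.mul_le_mul hn h
  have hMcast : (M : ℝ) = (n : ℝ) * ((n : ℝ) - 1) / 2 - 1 := by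
    rw [hMdef]
    rw [Nat.cast_sub h1le, Nat.cast_div hdvd (by norm_num)]
    push_cast [Nat.cast_sub (by omega : 1 ≤ n)]
    ring
  -- main bound
  have hnR : (2 : ℝ) ≤ (n : ℝ) := by exact_mod_cast hn
  have hM0 : (0 : ℝ) ≤ (M : ℝ) := Nat.cast_nonneg _
  have hmain : ((n : ℝ) / 2) * ((n : ℝ) * ((n : ℝ) - 1) / 2 - 1)
      ≤ ∑ h : Fin k, (↑((I h).sup (sigmaW (G1 n) (c1 n) I τ)) : ℝ) := by
    have step1 : ∑ h ∈ S, (↑((I h).sup (sigmaW (G1 n) (c1 n) I τ)) : ℝ)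
        ≤ ∑ h : Fin k, (↑((I h).sup (sigmaW (G1 n) (c1 n) I τ)) : ℝ) :=
      Finset.sum_le_sum_of_subset_of_nonneg (Finset.subset_univ _)
        (fun _ _ _ => Nat.cast_nonneg _)
    have step2 : (S.card : ℝ) * (M : ℝ)
        ≤ ∑ h ∈ S, (↑((I h).sup (sigmaW (G1 n) (c1 n) I τ)) : ℝ) := by
      have := Finset.card_nsmul_le_sum S
        (fun h => (↑((I h).sup (sigmaW (G1 n) (c1 n) I τ)) : ℝ)) ((M : ℝ))
        (fun a ha => by simpa using (Nat.cast_le (α := ℝ)).2 (hsup a ha))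
      simpa [nsmul_eq_mul] using this
    have step3 : ((n : ℝ) / 2) * (M : ℝ) ≤ (S.card : ℝ) * (M : ℝ) := by
      apply mul_le_mul_of_nonneg_right _ hM0
      have : (n : ℝ) ≤ 2 * (S.card : ℝ) := by exact_mod_cast hnS
      linarith
    rw [← hMcast]
    linarith
  refine ⟨hmain, ?_⟩
  have hω : (0 : ℝ) < (n : ℝ) * ((n : ℝ) - 1) / 2 := by nlinarith
  have h2 : ((n : ℝ) / 2) * ((n : ℝ) * ((n : ℝ) - 1) / 2 - 1) / ((n : ℝ) * ((n : ℝ) - 1) / 2)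
      = (n : ℝ) / 2 - 1 / ((n : ℝ) - 1) := by
    have hn0 : (n : ℝ) ≠ 0 := by linarith
    have hn1 : (n : ℝ) - 1 ≠ 0 := by linarith
    field_simp
  calc (n : ℝ) / 2 - 1 / ((n : ℝ) - 1)
      = ((n : ℝ) / 2) * ((n : ℝ) * ((n : ℝ) - 1) / 2 - 1) / ((n : ℝ) * ((n : ℝ) - 1) / 2) :=
        h2.symm
    _ ≤ _ := div_le_div_of_nonneg_right hmain hω.le
end

section
/- Let G^2_n be the 'windmill-like' graph: a central n-clique C_0 = {u_1,…,u_n}, and for each u ∈ C_0 a peripheral clique C_u ∪ {u} of size n with C_u pairwise disjoint and disjoint from C_0. Edges between a central vertex u and its peripheral vertices in C_u have weight 1; all other edges have weight 0. There exists a proper coloring 𝒞^2_n of G^2_n with exactly n color classes, each of cardinality n, such that each class contains exactly one central vertex and one vertex from each peripheral set C_v with v distinct from that central vertex. -/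
open Finset
open scoped Classical

/-- Vertices of `G²ₙ`: `(u, none)` is the central vertex `u` of the central `n`-clique
`C₀`; `(u, some i)` are the `n-1` peripheral vertices of the peripheral clique attached
to `u`. -/
abbrev V2 (n : ℕ) := Fin n × Option (Fin (n - 1))

/-- The windmill-like graph `G²ₙ`: `C₀ = {(u, none)}` is a clique, and each
`C_u ∪ {u} = {(u, b) : b}` is a clique. -/
def G2 (n : ℕ) : SimpleGraph (V2 n) :=
  SimpleGraph.fromRel (fun u v => (u.2 = none ∧ v.2 = none) ∨ u.1 = v.1)

/-- Edge weights of `G²ₙ`: center-to-periphery edges weigh `1`, all other edges `0`. -/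
def c2 (n : ℕ) : V2 n → V2 n → ℕ := fun u v =>
  if u.1 = v.1 ∧ ((u.2 = none ∧ v.2 ≠ none) ∨ (v.2 = none ∧ u.2 ≠ none)) then 1 else 0

/-- The `i`-th element of `Fin n \ {v}`, in order. -/
def pv (n : ℕ) (v : Fin n) (i : Fin (n - 1)) : Fin n :=
  if (i : ℕ) < (v : ℕ) then ⟨i, Nat.lt_of_lt_of_le i.isLt (Nat.sub_le n 1)⟩
  else ⟨i + 1, by have := i.isLt; omega⟩

lemma pv_ne (n : ℕ) (v : Fin n) (i : Fin (n - 1)) : pv n v i ≠ v := by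
  unfold pv
  split <;> (intro e; have := congrArg Fin.val e; simp only [Fin.val_mk] at this; omega)

lemma pv_inj (n : ℕ) (v : Fin n) {i j : Fin (n - 1)} (h : pv n v i = pv n v j) : i = j := by
  unfold pv at h
  have hi := i.isLt; have hj := j.isLt
  split at h <;> split at h <;> simp only [Fin.ext_iff] at h ⊢ <;> omega

/-- Inverse of `pv n v`. -/
def iv (n : ℕ) (v h : Fin n) (hne : h ≠ v) : Fin (n - 1) :=
  if hlt : (h : ℕ) < (v : ℕ) then ⟨h, by have := v.isLt; omega⟩
  else ⟨h - 1, by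
    have hv := v.isLt; have hh := h.isLt
    have : (h : ℕ) ≠ (v : ℕ) := fun e => hne (Fin.ext e)
    omega⟩

lemma pv_iv (n : ℕ) (v h : Fin n) (hne : h ≠ v) : pv n v (iv n v h hne) = h := by
  unfold pv iv
  have : (h : ℕ) ≠ (v : ℕ) := fun e => hne (Fin.ext e)
  split <;> rename_i h1 <;> simp only at h1 ⊢ <;> split <;>
    simp only [Fin.ext_iff] <;> omega

/-- The `h`-th color class. -/
noncomputable def Icl (n : ℕ) (h : Fin n) : Finset (V2 n) :=
  Finset.univ.filter (fun p =>
    match p.2 with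
    | none => p.1 = h
    | some i => pv n p.1 i = h)

lemma mem_Icl_none (n : ℕ) (h u : Fin n) :
    ((u, none) : V2 n) ∈ Icl n h ↔ u = h := by
  simp [Icl]

lemma mem_Icl_some (n : ℕ) (h u : Fin n) (i : Fin (n - 1)) :
    ((u, some i) : V2 n) ∈ Icl n h ↔ pv n u i = h := by
  simp [Icl]

/-- There is a proper coloring of `G²ₙ` with exactly `n` classes, each of cardinality
`n`, containing exactly one central vertex and exactly one vertex of each peripheral
set `C_v` for `v` different from its central vertex. -/
theorem G2_coloring_exists (n : ℕ) :
    ∃ I : Fin n → Finset (V2 n),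
      (∀ v : V2 n, ∃ h, v ∈ I h) ∧
      (∀ h h' v, v ∈ I h → v ∈ I h' → h = h') ∧
      (∀ h, ∀ u ∈ I h, ∀ v ∈ I h, ¬ (G2 n).Adj u v) ∧
      (∀ h, (I h).card = n) ∧
      (∀ h, ∃! u : Fin n, ((u, none) : V2 n) ∈ I h) ∧
      (∀ h u, ((u, none) : V2 n) ∈ I h →
        ∀ v : Fin n, v ≠ u → ∃! i : Fin (n - 1), ((v, some i) : V2 n) ∈ I h) := by
  refine ⟨Icl n, ?_, ?_, ?_, ?_, ?_, ?_⟩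
  · rintro ⟨u, _ | i⟩
    · exact ⟨u, (mem_Icl_none n u u).2 rfl⟩
    · exact ⟨pv n u i, (mem_Icl_some n _ u i).2 rfl⟩
  · rintro h h' ⟨u, _ | i⟩ h1 h2
    · rw [mem_Icl_none] at h1 h2; omega
    · rw [mem_Icl_some] at h1 h2; rw [← h1, h2]
  · rintro h ⟨u, bu⟩ hu ⟨v, bv⟩ hv hadj
    rw [G2, SimpleGraph.fromRel_adj] at hadj
    obtain ⟨hne, hrel⟩ := hadj
    match bu, bv with
    | none, none =>
        rw [mem_Icl_none] at hu hv; subst hu; subst hv; exact hne rfl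
    | none, some j =>
        rw [mem_Icl_none] at hu
        rw [mem_Icl_some] at hv
        have huv : u = v := by
          rcases hrel with ⟨_, hc⟩ | he | ⟨hc, _⟩ | he <;> simp_all
        subst huv; subst hu
        exact pv_ne n u j hv
    | some i, none =>
        rw [mem_Icl_some] at hu
        rw [mem_Icl_none] at hv
        have huv : u = v := by
          rcases hrel with ⟨hc, _⟩ | he | ⟨_, hc⟩ | he <;> simp_all
        subst huv; subst hv
        exact pv_ne n u i hu
    | some i, some j =>
        have huv : u = v := by
          rcases hrel with ⟨hc, _⟩ | he | ⟨hc, _⟩ | he <;> simp_all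
        subst huv
        rw [mem_Icl_some] at hu hv
        exact hne (by rw [pv_inj n u (hu.trans hv.symm)])
  · intro h
    have himg : Icl n h = Finset.univ.image (fun v : Fin n =>
        if hv : v = h then ((v, none) : V2 n) else (v, some (iv n v h (Ne.symm hv)))) := by
      ext ⟨u, bu⟩
      simp only [Finset.mem_image, Finset.mem_univ, true_and]
      constructor
      · intro hm
        match bu with
        | none =>
            rw [mem_Icl_none] at hm; subst hm
            exact ⟨u, by simp⟩
        | some i =>
            rw [mem_Icl_some] at hm
            have hne : u ≠ h := fun e => pv_ne n u i (by rw [hm, e])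
            refine ⟨u, ?_⟩
            rw [dif_neg hne]
            have : iv n u h (Ne.symm hne) = i :=
              pv_inj n u (by rw [pv_iv, hm])
            rw [this]
      · rintro ⟨v, hv⟩
        by_cases hvh : v = h
        · rw [dif_pos hvh] at hv
          rw [← hv, mem_Icl_none]; exact hvh
        · rw [dif_neg hvh] at hv
          rw [← hv, mem_Icl_some]; exact pv_iv n v h (Ne.symm hvh)
    rw [himg, Finset.card_image_of_injective, Finset.card_univ, Fintype.card_fin]
    intro a b hab
    by_cases ha : a = h <;> by_cases hb : b = h <;>
      simp_all [Prod.ext_iff]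
  · intro h
    exact ⟨h, (mem_Icl_none n h h).2 rfl, fun u hu => (mem_Icl_none n h u).1 hu⟩
  · intro h u hu v hv
    rw [mem_Icl_none] at hu; subst hu
    refine ⟨iv n v u (Ne.symm hv), (mem_Icl_some n u v _).2 (pv_iv n v u (Ne.symm hv)), ?_⟩
    intro i hi
    rw [mem_Icl_some] at hi
    exact pv_inj n v (by rw [hi, pv_iv])
end

section
/- For the instance (G^2_n, c^2_n) with the ordered coloring 𝒞^2_n = (I_1,…,I_n) where the central vertex of I_u is u, one has σ_u = u − 1 for each central vertex u, and σ_v ≤ 1 for each peripheral vertex v; consequently UB_2(G^2_n,c^2_n,𝒞^2_n) = Σ_{u=1}^{n}(u−1) = n(n−1)/2. -/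
open Finset
open scoped Classical

lemma c2_le_one (n : ℕ) (u v : V2 n) : c2 n u v ≤ 1 := by
  unfold c2; split <;> omega

/-- For `(G²ₙ, c²ₙ)` with the ordered coloring whose class `I u` has central vertex
`u` and one vertex of each peripheral set `C_v`, `v ≠ u`: the central vertex `u`
has `σ = u` (the number of preceding classes), peripheral vertices have `σ ≤ 1`,
and `UB₂ = Σ_{u} u = n(n-1)/2`. -/
theorem UB2_G2_value (n : ℕ)
    (I : Fin n → Finset (V2 n)) (τ : V2 n → Fin n)
    (hτ : ∀ v h, v ∈ I h ↔ τ v = h)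
    (hind : ∀ h, ∀ u ∈ I h, ∀ v ∈ I h, ¬ (G2 n).Adj u v)
    (hcentral : ∀ u : Fin n, ((u, none) : V2 n) ∈ I u)
    (hperiph : ∀ h v, v ≠ h → ∃! i : Fin (n - 1), ((v, some i) : V2 n) ∈ I h) :
    (∀ u : Fin n, sigmaW (G2 n) (c2 n) I τ ((u, none) : V2 n) = (u : ℕ)) ∧
    (∀ (v : Fin n) (i : Fin (n - 1)),
      sigmaW (G2 n) (c2 n) I τ ((v, some i) : V2 n) ≤ 1) ∧
    (∑ h : Fin n, (I h).sup (sigmaW (G2 n) (c2 n) I τ) = n * (n - 1) / 2) := by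
  have hτc : ∀ u : Fin n, τ ((u, none) : V2 n) = u := fun u => (hτ _ u).1 (hcentral u)
  -- Part 1 : central vertices
  have hcen : ∀ u : Fin n, sigmaW (G2 n) (c2 n) I τ ((u, none) : V2 n) = (u : ℕ) := by
    intro u
    unfold sigmaW
    rw [hτc]
    have hterm : ∀ h ∈ univ.filter (fun h => h < u),
        ((I h).filter (fun v => (G2 n).Adj ((u, none) : V2 n) v)).sup
          (fun v => c2 n ((u, none) : V2 n) v) = 1 := by
      intro h hh
      simp only [mem_filter, mem_univ, true_and] at hh
      have hne : u ≠ h := fun e => absurd hh (by simp [e])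
      obtain ⟨i, hi, -⟩ := hperiph h u hne
      refine le_antisymm (Finset.sup_le fun v _ => c2_le_one n _ _) ?_
      have hmem : ((u, some i) : V2 n) ∈
          (I h).filter (fun v => (G2 n).Adj ((u, none) : V2 n) v) := by
        refine mem_filter.2 ⟨hi, ?_⟩
        rw [G2, SimpleGraph.fromRel_adj]
        exact ⟨by simp, Or.inl (Or.inr rfl)⟩
      have hval : c2 n ((u, none) : V2 n) ((u, some i) : V2 n) = 1 := by simp [c2]
      have hle := Finset.le_sup (f := fun v => c2 n ((u, none) : V2 n) v) hmem
      rwa [hval] at hle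
    rw [Finset.sum_congr rfl hterm, Finset.sum_const, smul_eq_mul, mul_one]
    have : univ.filter (fun h : Fin n => h < u) = Finset.Iio u := by
      ext x; simp
    rw [this, Fin.card_Iio]
  -- key: terms of peripheral sums vanish except possibly at class `v`
  have hper0 : ∀ (v : Fin n) (i : Fin (n - 1)) (h : Fin n), h ≠ v →
      ((I h).filter (fun w => (G2 n).Adj ((v, some i) : V2 n) w)).sup
        (fun w => c2 n ((v, some i) : V2 n) w) = 0 := by
    intro v i h hne
    refine Nat.le_zero.1 (Finset.sup_le fun w hw => ?_)
    rw [mem_filter] at hw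
    have hz : c2 n ((v, some i) : V2 n) w = 0 := by
      unfold c2
      rw [if_neg]
      rintro ⟨h1, h2⟩
      have hw2 : w.2 = none := by
        rcases h2 with ⟨a, -⟩ | ⟨a, -⟩
        · simp at a
        · exact a
      have hwe : w = ((v, none) : V2 n) := Prod.ext h1.symm hw2
      have : τ w = h := (hτ w h).1 hw.1
      rw [hwe, hτc] at this
      exact hne this.symm
    omega
  -- Part 2 : peripheral vertices
  have hperle : ∀ (v : Fin n) (i : Fin (n - 1)),
      sigmaW (G2 n) (c2 n) I τ ((v, some i) : V2 n) ≤ 1 := by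
    intro v i
    unfold sigmaW
    by_cases hv : v ∈ univ.filter (fun h => h < τ ((v, some i) : V2 n))
    · rw [Finset.sum_eq_single_of_mem v hv (fun h _ hne => hper0 v i h hne)]
      exact Finset.sup_le fun w _ => c2_le_one n _ _
    · rw [Finset.sum_eq_zero (fun h hh => hper0 v i h (fun e => hv (by subst e; exact hh)))]
      omega
  refine ⟨hcen, hperle, ?_⟩
  -- Part 3
  have hsup : ∀ h : Fin n, (I h).sup (sigmaW (G2 n) (c2 n) I τ) = (h : ℕ) := by
    intro h
    refine le_antisymm (Finset.sup_le ?_) ?_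
    · rintro ⟨a, ob⟩ hw
      have hτw : τ ((a, ob) : V2 n) = h := (hτ _ h).1 hw
      cases ob with
      | none =>
        have hah : a = h := by rw [← hτc a, hτw]
        rw [hcen a, hah]
      | some i =>
        by_cases hah : a < h
        · have h1 : (1 : ℕ) ≤ (h : ℕ) := by
            have := (Fin.lt_def).1 hah; omega
          exact (hperle a i).trans h1
        · have hz : sigmaW (G2 n) (c2 n) I τ ((a, some i) : V2 n) = 0 := by
            unfold sigmaW
            rw [hτw]
            refine Finset.sum_eq_zero fun h' hh' => ?_
            simp only [mem_filter, mem_univ, true_and] at hh'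
            exact hper0 a i h' (fun e => hah (e ▸ hh'))
          rw [hz]; exact Nat.zero_le _
    · have := Finset.le_sup (f := sigmaW (G2 n) (c2 n) I τ) (hcentral h)
      rwa [hcen h] at this
  rw [Finset.sum_congr rfl (fun h _ => hsup h), Fin.sum_univ_eq_sum_range (fun i => i) n,
    Finset.sum_range_id]
end

section
/- The ratio UB_2(G^2_n,c^2_n,𝒞^2_n)/UB_1(G^2_n,c^2_n,𝒞^2_n) ≥ (n−1)/2 tends to infinity as n → ∞; i.e., the combinatorial bound UB_2 can be arbitrarily worse than the LP bound UB_1. -/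
open Finset
open scoped Classical

/-- For `(G²ₙ, c²ₙ)` with the coloring `𝒞²ₙ`, the ratio `UB₂/UB₁ ≥ (n-1)/2`
(where `UB₁` is the optimal value of the dual LP), which tends to infinity:
`UB₂` can be arbitrarily worse than `UB₁`. -/
theorem UB2_div_UB1_G2_unbounded (n : ℕ) (hn : 2 ≤ n)
    (I : Fin n → Finset (V2 n)) (τ : V2 n → Fin n)
    (hτ : ∀ v h, v ∈ I h ↔ τ v = h)
    (hind : ∀ h, ∀ u ∈ I h, ∀ v ∈ I h, ¬ (G2 n).Adj u v)
    (hcentral : ∀ u : Fin n, ((u, none) : V2 n) ∈ I u)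
    (hperiph : ∀ h v, v ≠ h → ∃! i : Fin (n - 1), ((v, some i) : V2 n) ∈ I h) :
    ((n : ℝ) - 1) / 2 ≤
      (↑(∑ h : Fin n, (I h).sup (sigmaW (G2 n) (c2 n) I τ)) : ℝ) /
        sInf {x : ℝ | ∃ (ϱ : V2 n → V2 n → ℝ) (π : Fin n → ℝ),
          (∀ u v, 0 ≤ ϱ u v) ∧
          (∀ u v, (G2 n).Adj u v → ϱ u v + ϱ v u = (c2 n u v : ℝ)) ∧
          (∀ h, 0 ≤ π h) ∧
          (∀ h, ∀ u ∈ I h,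
            ∑ v ∈ Finset.univ.filter (fun v => (G2 n).Adj u v), ϱ u v ≤ π h) ∧
          x = ∑ h, π h} := by
  classical
  set Sset : Set ℝ := {x : ℝ | ∃ (ϱ : V2 n → V2 n → ℝ) (π : Fin n → ℝ),
          (∀ u v, 0 ≤ ϱ u v) ∧
          (∀ u v, (G2 n).Adj u v → ϱ u v + ϱ v u = (c2 n u v : ℝ)) ∧
          (∀ h, 0 ≤ π h) ∧
          (∀ h, ∀ u ∈ I h,
            ∑ v ∈ Finset.univ.filter (fun v => (G2 n).Adj u v), ϱ u v ≤ π h) ∧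
          x = ∑ h, π h} with hSset
  -- membership: n ∈ Sset
  have hmem : (n : ℝ) ∈ Sset := by
    refine ⟨fun u v => if u.1 = v.1 ∧ u.2 ≠ none ∧ v.2 = none then 1 else 0,
      fun _ => 1, ?_, ?_, ?_, ?_, ?_⟩
    · intro u v; dsimp only; split_ifs <;> norm_num
    · rintro ⟨a, o₁⟩ ⟨b, o₂⟩ hadj
      rw [G2, SimpleGraph.fromRel_adj] at hadj
      obtain ⟨hne, hrel⟩ := hadj
      by_cases hab : a = b
      · subst hab
        match o₁, o₂ with
        | none, none => simp at hne
        | none, some i => simp [c2]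
        | some i, none => simp [c2]
        | some i, some j => simp [c2]
      · have hoo : o₁ = none ∧ o₂ = none := by
          rcases hrel with (⟨h1, h2⟩ | h) | (⟨h1, h2⟩ | h) <;>
            first | exact ⟨h1, h2⟩ | exact ⟨h2, h1⟩ | exact absurd h hab |
              exact absurd h.symm hab
        obtain ⟨h1, h2⟩ := hoo; subst h1; subst h2
        simp [c2, hab, Ne.symm hab]
    · intro h; norm_num
    · rintro h ⟨a, o⟩ hu
      match o with
      | none => simp
      | some i =>
        calc ∑ v ∈ Finset.univ.filter (fun v => (G2 n).Adj ((a, some i) : V2 n) v),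
              (if (a, some i).1 = v.1 ∧ ((a, some i) : V2 n).2 ≠ none ∧ v.2 = none
                then (1:ℝ) else 0)
            ≤ ∑ v : V2 n,
              (if (a, some i).1 = v.1 ∧ ((a, some i) : V2 n).2 ≠ none ∧ v.2 = none
                then (1:ℝ) else 0) := by
              apply Finset.sum_le_sum_of_subset_of_nonneg (Finset.subset_univ _)
              intro v _ _; split_ifs <;> norm_num
          _ = ∑ v : V2 n, (if v = ((a, none) : V2 n) then (1:ℝ) else 0) := by
              apply Finset.sum_congr rfl
              rintro ⟨b, o'⟩ _
              by_cases hb : a = b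
              · subst hb
                match o' with
                | none => simp
                | some j => simp
              · simp [hb, Prod.ext_iff, Ne.symm hb]
          _ = 1 := by rw [Finset.sum_ite_eq' Finset.univ ((a, none) : V2 n)]
                      simp
    · simp
  have hne : Sset.Nonempty := ⟨_, hmem⟩
  -- lower bound: every element of Sset is ≥ 1
  have hlb : ∀ x ∈ Sset, (1:ℝ) ≤ x := by
    rintro x ⟨ϱ, π, hϱ0, hedge, hπ0, hcon, rfl⟩
    set w : Fin n := ⟨0, by omega⟩
    set i0 : Fin (n-1) := ⟨0, by omega⟩
    set u : V2 n := (w, none)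
    set v : V2 n := (w, some i0)
    have hadj : (G2 n).Adj u v := by
      rw [G2, SimpleGraph.fromRel_adj]
      exact ⟨by simp [u, v], Or.inl (Or.inr rfl)⟩
    have hc : (c2 n u v : ℝ) = 1 := by simp [c2, u, v]
    have hsum : ϱ u v + ϱ v u = 1 := by rw [hedge u v hadj, hc]
    have htv : v ∈ I (τ v) := (hτ v (τ v)).mpr rfl
    have htvw : τ v ≠ w := by
      intro hcontra
      exact hind w u (hcentral w) v (hcontra ▸ htv) hadj
    have h1 : ϱ u v ≤ π w := by
      refine le_trans ?_ (hcon w u (hcentral w))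
      apply Finset.single_le_sum (fun z _ => hϱ0 u z)
      simp [hadj]
    have h2 : ϱ v u ≤ π (τ v) := by
      refine le_trans ?_ (hcon (τ v) v htv)
      apply Finset.single_le_sum (fun z _ => hϱ0 v z)
      simp [hadj.symm]
    have hpair : π w + π (τ v) ≤ ∑ h, π h := by
      have := Finset.sum_le_sum_of_subset_of_nonneg
        (Finset.subset_univ ({w, τ v} : Finset (Fin n))) (fun z _ _ => hπ0 z)
      rwa [Finset.sum_pair (Ne.symm htvw)] at this
    linarith
  have hbdd : BddBelow Sset := ⟨1, fun x hx => hlb x hx⟩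
  have hS1 : (1:ℝ) ≤ sInf Sset := le_csInf hne hlb
  have hSn : sInf Sset ≤ (n : ℝ) := csInf_le hbdd hmem
  -- numerator bound
  set A : ℕ := ∑ h : Fin n, (I h).sup (sigmaW (G2 n) (c2 n) I τ) with hA
  have hAge : n * (n - 1) ≤ 2 * A := by
    have hterm : ∀ h : Fin n, (h : ℕ) ≤ (I h).sup (sigmaW (G2 n) (c2 n) I τ) := by
      intro h
      have hτh : τ ((h, none) : V2 n) = h := (hτ _ h).mp (hcentral h)
      have hσ : (h : ℕ) ≤ sigmaW (G2 n) (c2 n) I τ ((h, none) : V2 n) := by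
        rw [sigmaW, hτh]
        calc (h : ℕ) = (Finset.univ.filter (fun h' : Fin n => h' < h)).card := by
              have : Finset.univ.filter (fun h' : Fin n => h' < h) = Finset.Iio h := by
                ext x; simp
              rw [this, Fin.card_Iio]
          _ = ∑ h' ∈ Finset.univ.filter (fun h' : Fin n => h' < h), 1 := by
              rw [Finset.sum_const, smul_eq_mul, mul_one]
          _ ≤ _ := by
              apply Finset.sum_le_sum
              intro h' hh'
              have hh'lt : h' < h := (Finset.mem_filter.mp hh').2
              obtain ⟨i, hi, _⟩ := hperiph h' h (Ne.symm (ne_of_lt hh'lt))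
              have hadj : (G2 n).Adj ((h, none) : V2 n) ((h, some i) : V2 n) := by
                rw [G2, SimpleGraph.fromRel_adj]
                exact ⟨by simp, Or.inl (Or.inr rfl)⟩
              have hmem' : ((h, some i) : V2 n) ∈
                  (I h').filter (fun v => (G2 n).Adj ((h, none) : V2 n) v) :=
                Finset.mem_filter.mpr ⟨hi, hadj⟩
              have := Finset.le_sup (f := fun v => c2 n ((h, none) : V2 n) v) hmem'
              simpa [c2] using this
      exact le_trans hσ (Finset.le_sup (hcentral h))
    calc n * (n - 1) = (∑ i ∈ Finset.range n, i) * 2 :=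
          (Finset.sum_range_id_mul_two n).symm
      _ = 2 * ∑ h : Fin n, (h : ℕ) := by
          rw [← Fin.sum_univ_eq_sum_range (fun i => i) n]; ring
      _ ≤ 2 * A := by
          apply Nat.mul_le_mul_left
          exact Finset.sum_le_sum (fun h _ => hterm h)
  have hAgeR : (n : ℝ) * ((n : ℝ) - 1) ≤ 2 * (A : ℝ) := by
    have := hAge
    have hcast : ((n * (n-1) : ℕ) : ℝ) ≤ ((2 * A : ℕ) : ℝ) := Nat.cast_le.mpr this
    push_cast [Nat.cast_sub (by omega : 1 ≤ n)] at hcast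
    linarith
  have hSpos : 0 < sInf Sset := lt_of_lt_of_le one_pos hS1
  rw [le_div_iff₀ hSpos]
  have hnn : (0:ℝ) ≤ ((n:ℝ) - 1) / 2 := by
    have : (2:ℝ) ≤ (n:ℝ) := by exact_mod_cast hn
    linarith
  calc ((n:ℝ) - 1) / 2 * sInf Sset ≤ ((n:ℝ) - 1) / 2 * (n:ℝ) :=
        mul_le_mul_of_nonneg_left hSn hnn
    _ ≤ (A : ℝ) := by linarith
end

section
/- Let G^3_n = K_{n,n}, the complete bipartite graph with parts I_1 = {1,…,n} and I_2 = {n+1,…,2n}, all edge weights equal to 1, and coloring 𝒞^3_n = {I_1, I_2}. Then UB_1(G^3_n, c^3_n, 𝒞^3_n) = n: every feasible dual solution satisfies n(π_{I_1} + π_{I_2}) ≥ Σ_e c_e = n², and assigning all edge weights to their I_2-endpoints achieves value n. -/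
open Finset
open scoped Classical

/-- `G³ₙ = K_{n,n}` on `Fin (2n)`: left part `{0,…,n-1}`, right part `{n,…,2n-1}`. -/
def G3 (n : ℕ) : SimpleGraph (Fin (2 * n)) :=
  SimpleGraph.fromRel (fun u v => (u : ℕ) < n ∧ n ≤ (v : ℕ))

/-- Unit edge weights. -/
def c3 (n : ℕ) : Fin (2 * n) → Fin (2 * n) → ℕ := fun _ _ => 1

/-- The two-class coloring of `K_{n,n}`: `I 0` is the left part, `I 1` the right part. -/
def I3 (n : ℕ) : Fin 2 → Finset (Fin (2 * n)) := fun h =>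
  if h = 0 then Finset.univ.filter (fun u => (u : ℕ) < n)
  else Finset.univ.filter (fun u => n ≤ (u : ℕ))

lemma adj_iff (n : ℕ) (u v : Fin (2*n)) :
    (G3 n).Adj u v ↔ (((u:ℕ) < n ∧ n ≤ (v:ℕ)) ∨ ((v:ℕ) < n ∧ n ≤ (u:ℕ))) := by
  constructor
  · rintro ⟨-, h⟩; tauto
  · rintro (h | h) <;> exact ⟨by intro e; subst e; omega, by tauto⟩

lemma card_left (n : ℕ) : (Finset.univ.filter (fun u : Fin (2*n) => (u:ℕ) < n)).card = n := by
  rw [Finset.card_filter]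
  rw [Fin.sum_univ_eq_sum_range (fun i => if i < n then 1 else 0)]
  rw [Finset.sum_ite, Finset.sum_const, Finset.sum_const]
  have : (range (2*n)).filter (fun x => x < n) = range n := by
    ext x; simp; omega
  simp [this]

lemma card_right (n : ℕ) : (Finset.univ.filter (fun u : Fin (2*n) => n ≤ (u:ℕ))).card = n := by
  have h := card_left n
  have h2 : (Finset.univ.filter (fun u : Fin (2*n) => n ≤ (u:ℕ))) = (Finset.univ.filter (fun u : Fin (2*n) => (u:ℕ) < n))ᶜ := by
    ext x; simp
  rw [h2, Finset.card_compl, h]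
  simp; omega

lemma filter_adj_left (n : ℕ) (u : Fin (2*n)) (hu : (u:ℕ) < n) :
    Finset.univ.filter (fun v => (G3 n).Adj u v)
      = Finset.univ.filter (fun v : Fin (2*n) => n ≤ (v:ℕ)) := by
  ext v; simp [adj_iff]; omega

lemma filter_adj_right (n : ℕ) (u : Fin (2*n)) (hu : n ≤ (u:ℕ)) :
    Finset.univ.filter (fun v => (G3 n).Adj u v)
      = Finset.univ.filter (fun v : Fin (2*n) => (v:ℕ) < n) := by
  ext v; simp [adj_iff]; omega

/-- `UB₁(G³ₙ, c³ₙ, 𝒞³ₙ) = n`: the dual LP has optimal value `n`. -/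
theorem UB1_G3_eq_n (n : ℕ) (hn : 1 ≤ n) :
    IsLeast {x : ℝ | ∃ (ϱ : Fin (2 * n) → Fin (2 * n) → ℝ) (π : Fin 2 → ℝ),
      (∀ u v, 0 ≤ ϱ u v) ∧
      (∀ u v, (G3 n).Adj u v → ϱ u v + ϱ v u = (c3 n u v : ℝ)) ∧
      (∀ h, 0 ≤ π h) ∧
      (∀ h, ∀ u ∈ I3 n h,
        ∑ v ∈ Finset.univ.filter (fun v => (G3 n).Adj u v), ϱ u v ≤ π h) ∧
      x = ∑ h, π h} (n : ℝ) := by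
  constructor
  · -- membership
    refine ⟨fun u v => if n ≤ (u:ℕ) then 1 else 0, fun h => if h = 0 then 0 else (n:ℝ),
      fun u v => by positivity, ?_, fun h => by positivity, ?_, ?_⟩
    · intro u v huv
      rw [adj_iff] at huv
      rcases huv with ⟨h1, h2⟩ | ⟨h1, h2⟩
      · simp only [c3, Nat.cast_one]
        rw [if_neg (by omega : ¬ n ≤ (u:ℕ)), if_pos h2]; norm_num
      · simp only [c3, Nat.cast_one]
        rw [if_pos h2, if_neg (by omega : ¬ n ≤ (v:ℕ))]; norm_num
    · intro h u hu
      fin_cases h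
      · simp [I3] at hu
        rw [Finset.sum_eq_zero
          (fun v _ => show (if n ≤ (u:ℕ) then (1:ℝ) else 0) = 0 from
            if_neg (by omega))]
        simp
      · simp [I3] at hu
        rw [filter_adj_right n u hu,
          Finset.sum_congr rfl
            (fun v _ => show (if n ≤ (u:ℕ) then (1:ℝ) else 0) = 1 from if_pos hu),
          Finset.sum_const, card_left]
        simp
    · rw [Fin.sum_univ_two]; norm_num
  · -- lower bound
    rintro x ⟨ϱ, π, hpos, hedge, hπ, hcon, rfl⟩
    set L := Finset.univ.filter (fun u : Fin (2*n) => (u:ℕ) < n) with hL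
    set R := Finset.univ.filter (fun u : Fin (2*n) => n ≤ (u:ℕ)) with hR
    have key : ∑ u ∈ L, ∑ v ∈ R, (ϱ u v + ϱ v u) = (n:ℝ) * n := by
      have h1 : ∀ u ∈ L, ∀ v ∈ R, ϱ u v + ϱ v u = 1 := by
        intro u hu v hv
        simp only [hL, hR, mem_filter] at hu hv
        have := hedge u v (by rw [adj_iff]; left; exact ⟨hu.2, hv.2⟩)
        simpa [c3] using this
      rw [Finset.sum_congr rfl (fun u hu => Finset.sum_congr rfl (h1 u hu))]
      simp only [Finset.sum_const, nsmul_eq_mul, mul_one, hL, hR, card_left, card_right]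
    have h1 : ∑ u ∈ L, ∑ v ∈ R, ϱ u v ≤ (n:ℝ) * π 0 := by
      calc ∑ u ∈ L, ∑ v ∈ R, ϱ u v ≤ ∑ u ∈ L, π 0 := by
            apply Finset.sum_le_sum
            intro u hu
            simp only [hL, mem_filter] at hu
            have := hcon 0 u (by simp [I3, hu.2])
            rwa [filter_adj_left n u hu.2] at this
        _ = (n:ℝ) * π 0 := by
            rw [Finset.sum_const, hL, card_left, nsmul_eq_mul]
    have h2 : ∑ u ∈ R, ∑ v ∈ L, ϱ u v ≤ (n:ℝ) * π 1 := by
      calc ∑ u ∈ R, ∑ v ∈ L, ϱ u v ≤ ∑ u ∈ R, π 1 := by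
            apply Finset.sum_le_sum
            intro u hu
            simp only [hR, mem_filter] at hu
            have := hcon 1 u (by simp [I3, hu.2])
            rwa [filter_adj_right n u hu.2] at this
        _ = (n:ℝ) * π 1 := by
            rw [Finset.sum_const, hR, card_right, nsmul_eq_mul]
    have hcomm : ∑ u ∈ R, ∑ v ∈ L, ϱ u v = ∑ u ∈ L, ∑ v ∈ R, ϱ v u := Finset.sum_comm
    have hsplit : ∑ u ∈ L, ∑ v ∈ R, (ϱ u v + ϱ v u)
        = (∑ u ∈ L, ∑ v ∈ R, ϱ u v) + (∑ u ∈ L, ∑ v ∈ R, ϱ v u) := by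
      simp [Finset.sum_add_distrib]
    have hnn : (n:ℝ) * n ≤ (n:ℝ) * (π 0 + π 1) := by
      rw [← key, hsplit, mul_add, ← hcomm]; exact add_le_add h1 h2
    have hnpos : (0:ℝ) < n := by exact_mod_cast hn
    rw [Fin.sum_univ_two]
    exact le_of_mul_le_mul_left hnn hnpos
end

section
/- The alternative bound of Shimizu et al. is dominated by UB_1: given an ordered proper coloring 𝒞, assign for each edge e = {u,v} with τ(u) < τ(v) the full weight ϱ̃_{e,u} = c_e, ϱ̃_{e,v} = 0, and set π̃_I = max{Σ_{e∈δ(u)} ϱ̃_{e,u} : u ∈ I}. Then (ϱ̃, π̃) is a feasible solution of the UB_1 dual LP, so UB_1(G,c,𝒞) ≤ Σ_I π̃_I. -/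
open Finset
open scoped Classical

/-- The alternative bound of Shimizu et al. is dominated by `UB₁`: assigning the full
weight of each edge to the endpoint with smaller color index, together with
`π̃_I = max_{u ∈ I} Σ_{e ∈ δ(u)} ϱ̃_{e,u}`, is a feasible solution of the `UB₁`
dual LP, so `UB₁(G,c,𝒞) ≤ Σ_I π̃_I`. -/
theorem shimizu_alternative_dominated {V : Type*} [Fintype V]
    (G : SimpleGraph V) (c : V → V → ℝ)
    (hcsymm : ∀ u v, c u v = c v u) (hcnn : ∀ u v, 0 ≤ c u v)
    (k : ℕ) (I : Fin k → Finset V) (τ : V → Fin k)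
    (hτ : ∀ v h, v ∈ I h ↔ τ v = h)
    (hind : ∀ h, ∀ u ∈ I h, ∀ v ∈ I h, ¬ G.Adj u v)
    (hne : ∀ h, (I h).Nonempty) :
    (∀ u v, G.Adj u v →
      (if τ u < τ v then c u v else 0) + (if τ v < τ u then c v u else 0) = c u v) ∧
    sInf {x : ℝ | ∃ (ϱ : V → V → ℝ) (π : Fin k → ℝ),
        (∀ u v, 0 ≤ ϱ u v) ∧
        (∀ u v, G.Adj u v → ϱ u v + ϱ v u = c u v) ∧
        (∀ h, 0 ≤ π h) ∧
        (∀ h, ∀ u ∈ I h,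
          ∑ v ∈ Finset.univ.filter (fun v => G.Adj u v), ϱ u v ≤ π h) ∧
        x = ∑ h, π h}
      ≤ ∑ h : Fin k, (I h).sup' (hne h)
          (fun u => ∑ v ∈ Finset.univ.filter (fun v => G.Adj u v),
            if τ u < τ v then c u v else 0) := by
  have hneq : ∀ u v, G.Adj u v → τ u ≠ τ v := by
    intro u v hadj heq
    exact hind (τ u) u ((hτ u (τ u)).mpr rfl) v ((hτ v (τ u)).mpr heq.symm) hadj
  have hfeas : ∀ u v, G.Adj u v →
      (if τ u < τ v then c u v else 0) + (if τ v < τ u then c v u else 0) = c u v := by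
    intro u v hadj
    rcases lt_or_gt_of_ne (hneq u v hadj) with h | h
    · rw [if_pos h, if_neg (not_lt.mpr h.le), add_zero]
    · rw [if_neg (not_lt.mpr h.le), if_pos h, zero_add, hcsymm]
  refine ⟨hfeas, ?_⟩
  set f : V → ℝ := fun u => ∑ v ∈ Finset.univ.filter (fun v => G.Adj u v),
      if τ u < τ v then c u v else 0 with hf
  have hfnn : ∀ u, 0 ≤ f u := fun u =>
    Finset.sum_nonneg fun v _ => by split <;> [exact hcnn u v; rfl]
  apply csInf_le
  · refine ⟨0, ?_⟩
    rintro x ⟨ϱ, π, _, _, hπ, _, rfl⟩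
    exact Finset.sum_nonneg fun h _ => hπ h
  · refine ⟨fun u v => if τ u < τ v then c u v else 0,
      fun h => (I h).sup' (hne h) f, ?_, hfeas, ?_, ?_, rfl⟩
    · intro u v; dsimp only; split <;> [exact hcnn u v; rfl]
    · intro h
      obtain ⟨u, hu⟩ := hne h
      exact le_trans (hfnn u) (Finset.le_sup' f hu)
    · intro h u hu
      exact Finset.le_sup' f hu
end
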